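/- The Mordell integral h(z; τ) := ∫_ℝ e^{πiτt² - 2πzt} / cosh(πt) dt satisfies h(z; τ) + h(z+1; τ) = (2/√(-iτ)) e^{πi(z+1/2)²/τ} for all z ∈ ℂ and τ in the upper half-plane. -/

import Mathlib

/-!
Since `e^{πt} + e^{-πt} = 2 cosh(πt)`, the integrands of `h(z; τ)` and `h(z + 1; τ)` add up to
the Gaussian `2 e^{πiτt² - 2π(z + 1/2)t}`, whose integral is computed by completing the square.
-/

open Complex

/-- The Mordell integral `h(z; τ) = ∫_ℝ e^{πiτt² - 2πzt}/cosh(πt) dt`. -/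
noncomputable def mordellH (z τ : ℂ) : ℂ :=
  ∫ t : ℝ, Complex.exp ((Real.pi : ℂ) * I * τ * (t : ℂ) ^ 2 - 2 * (Real.pi : ℂ) * z * (t : ℂ))
    / Complex.cosh ((Real.pi : ℂ) * (t : ℂ))

open MeasureTheory
open scoped Real

lemma one_le_norm_cosh_ofReal (x : ℝ) : 1 ≤ ‖cosh (x : ℂ)‖ := by
  rw [← ofReal_cosh, norm_real, Real.norm_of_nonneg (Real.cosh_pos x).le]
  exact Real.one_le_cosh x

lemma cosh_ofReal_ne_zero (x : ℝ) : cosh (x : ℂ) ≠ 0 :=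
  norm_pos_iff.mp (one_pos.trans_le (one_le_norm_cosh_ofReal x))

lemma integrable_cexp_quadratic_div_cosh {b : ℂ} (hb : b.re < 0) (c : ℂ) (a : ℝ) :
    Integrable fun t : ℝ ↦ cexp (b * t ^ 2 + c * t) / cosh (a * t) := by
  refine (integrable_cexp_quadratic' hb c 0).mono ?_ (.of_forall fun t ↦ ?_)
  · have hcosh (t : ℝ) : cosh (a * t) ≠ 0 := by exact_mod_cast cosh_ofReal_ne_zero (a * t)
    exact (by fun_prop : Continuous fun t : ℝ ↦ cexp (b * t ^ 2 + c * t) / cosh (a * t))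
      |>.aestronglyMeasurable
  · rw [add_zero, norm_div]
    exact div_le_self (norm_nonneg _) (by exact_mod_cast one_le_norm_cosh_ofReal (a * t))

lemma exp_add_div_cosh_add_exp_sub_div_cosh {x : ℂ} (hx : cosh x ≠ 0) (u : ℂ) :
    cexp (u + x) / cosh x + cexp (u - x) / cosh x = 2 * cexp u := by
  rw [← add_div, div_eq_iff hx, cosh, exp_add, exp_sub, exp_neg]
  field_simp

lemma integral_cexp_pi_mul_I_mul_sq_sub {τ : ℂ} (hτ : 0 < τ.im) (w : ℂ) :
    ∫ t : ℝ, cexp (π * I * τ * t ^ 2 - 2 * π * w * t)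
      = ((-I * τ) ^ (1 / 2 : ℂ))⁻¹ * cexp (π * I * w ^ 2 / τ) := by
  have hb : (π * I * τ).re < 0 := by simpa using mul_pos Real.pi_pos hτ
  have hπ : (π : ℂ) ≠ 0 := ofReal_ne_zero.mpr Real.pi_ne_zero
  have hτ0 : τ ≠ 0 := by rintro rfl; simp at hτ
  have hre : 0 < (-I * τ).re := by simpa using hτ
  have harg : (-I * τ).arg ≠ π := fun h ↦ lt_asymm hre (arg_eq_pi_iff.mp h).1
  have hscale : (π : ℂ) / -(π * I * τ) = (-I * τ)⁻¹ := by field_simp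
  have hexp : -((-2 * π * w) ^ 2 / (4 * (π * I * τ))) = π * I * w ^ 2 / τ := by
    rw [neg_div', div_eq_div_iff (by simp [hπ, hτ0]) hτ0]
    linear_combination (-4 * π ^ 2 * w ^ 2 * τ) * I_sq
  have hgauss := integral_cexp_quadratic hb (-2 * π * w) 0
  simp only [add_zero, zero_sub, hscale, inv_cpow _ _ harg, hexp] at hgauss
  simpa [sub_eq_add_neg] using hgauss

/-- `h(z; τ) + h(z+1; τ) = (2/√(-iτ)) e^{πi(z+1/2)²/τ}`. -/
theorem mordellH_add_one (z τ : ℂ) (hτ : 0 < τ.im) :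
    mordellH z τ + mordellH (z + 1) τ
      = 2 / (-I * τ) ^ (1 / 2 : ℂ)
        * Complex.exp ((Real.pi : ℂ) * I * (z + 1 / 2) ^ 2 / τ) := by
  have hb : (π * I * τ).re < 0 := by simpa using mul_pos Real.pi_pos hτ
  have hint (w : ℂ) : Integrable fun t : ℝ ↦
      cexp (π * I * τ * t ^ 2 - 2 * π * w * t) / cosh (π * t) := by
    simpa [sub_eq_add_neg] using integrable_cexp_quadratic_div_cosh hb (-2 * π * w) π
  have hsum (t : ℝ) : cexp (π * I * τ * t ^ 2 - 2 * π * z * t) / cosh (π * t)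
      + cexp (π * I * τ * t ^ 2 - 2 * π * (z + 1) * t) / cosh (π * t)
      = 2 * cexp (π * I * τ * t ^ 2 - 2 * π * (z + 1 / 2) * t) := by
    have hcosh : cosh (π * t) ≠ 0 := by exact_mod_cast cosh_ofReal_ne_zero (π * t)
    rw [← exp_add_div_cosh_add_exp_sub_div_cosh hcosh]
    ring_nf
  rw [mordellH, mordellH, ← integral_add (hint z) (hint (z + 1))]
  simp_rw [hsum]
  rw [integral_const_mul, integral_cexp_pi_mul_I_mul_sq_sub hτ]
  ring
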